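/- arXiv:1502.04918 — 3 statements merged into one kernel-verified Lean document; each statement's English description precedes it below -/
import Mathlib

section
/- Let U be a finite set and let 𝒟 be a finite family of subsets of U with nonnegative weights w. Suppose O ⊆ 𝒟 covers U (every element of U lies in some member of O). Let C be a positive integer, let ε ≥ 0 and w_t ≥ 0 be reals. Suppose G ⊆ O satisfies |G| = C and w(D) ≥ w_t for every D ∈ G (G plays the role of the C most expensive sets of O, and w_t the cheapest weight in G). Suppose H ⊆ 𝒟 is disjoint from G, |H| ≤ ε·C, and w(D) ≤ w_t for every D ∈ H. Suppose S ⊆ 𝒟 \ (G ∪ H) covers every element of U that lies in no member of G ∪ H, and S has minimum total weight among all subfamilies of 𝒟 \ (G ∪ H) with this covering property. Then w(G) + w(H) + w(S) ≤ (1 + ε)·w(O), where w of a family denotes the sum of the weights of its members. -/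
/-!
Remove from `O` the guessed sets `G` and the extra sets `H`: what is left of `O` still covers
every element that `G ∪ H` misses, so by optimality `w(S) ≤ w(O \ (G ∪ H))`, and hence
`w(G) + w(S) ≤ w(O)`. The extra sets are paid for by the guessed ones: each set of `H` weighs at
most `wt`, each of the `C` sets of `G` at least `wt`, and `|H| ≤ ε C`, so `w(H) ≤ ε w(G) ≤ ε w(O)`.
-/

open Finset

namespace Finset

variable {α β : Type*} [DecidableEq α]

lemma exists_mem_sdiff_of_forall_notMem {U : Finset α} {O R : Finset (Finset α)}
    (hOcov : ∀ x ∈ U, ∃ D ∈ O, x ∈ D) :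
    ∀ x ∈ U, (∀ D ∈ R, x ∉ D) → ∃ D ∈ O \ R, x ∈ D := by
  intro x hx hxR
  obtain ⟨D, hDO, hxD⟩ := hOcov x hx
  exact ⟨D, mem_sdiff.mpr ⟨hDO, fun hDR => hxR D hDR hxD⟩, hxD⟩

lemma sum_add_sum_sdiff_union_le [DecidableEq β] {O G H : Finset β} {f : β → ℝ}
    (hf : ∀ D ∈ O, 0 ≤ f D) (hGO : G ⊆ O) :
    ∑ D ∈ G, f D + ∑ D ∈ O \ (G ∪ H), f D ≤ ∑ D ∈ O, f D := by
  rw [← sum_sdiff hGO, add_comm (∑ D ∈ G, f D)]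
  gcongr ?_ + _
  exact sum_le_sum_of_subset_of_nonneg (sdiff_subset_sdiff le_rfl subset_union_left)
    fun D hD _ => hf D (sdiff_subset hD)

lemma sum_le_mul_sum_of_card_le {G H : Finset β} {f : β → ℝ} {ε t : ℝ} (hε : 0 ≤ ε)
    (ht : 0 ≤ t) (hG : ∀ D ∈ G, t ≤ f D) (hH : ∀ D ∈ H, f D ≤ t)
    (hcard : (#H : ℝ) ≤ ε * #G) :
    ∑ D ∈ H, f D ≤ ε * ∑ D ∈ G, f D :=
  calc ∑ D ∈ H, f D ≤ #H * t := by simpa using sum_le_card_nsmul H f t hH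
    _ ≤ ε * (#G * t) := by rw [← mul_assoc]; exact mul_le_mul_of_nonneg_right hcard ht
    _ ≤ ε * ∑ D ∈ G, f D := by
        gcongr
        simpa using card_nsmul_le_sum G f t hG

end Finset

theorem wudc_guessing_inequality_general {α : Type*} [DecidableEq α]
    (U : Finset α) (𝒟 : Finset (Finset α))
    (w : Finset α → ℝ) (hw : ∀ D ∈ 𝒟, 0 ≤ w D)
    (O : Finset (Finset α)) (hO : O ⊆ 𝒟)
    (hOcov : ∀ x ∈ U, ∃ D ∈ O, x ∈ D)
    (C : ℕ) (ε wt : ℝ) (hε : 0 ≤ ε) (hwt : 0 ≤ wt)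
    (G : Finset (Finset α)) (hGO : G ⊆ O) (hGcard : G.card = C)
    (hGw : ∀ D ∈ G, wt ≤ w D)
    (H : Finset (Finset α))
    (hHcard : (H.card : ℝ) ≤ ε * C) (hHw : ∀ D ∈ H, w D ≤ wt)
    (S : Finset (Finset α))
    (hSopt : ∀ S' ⊆ 𝒟 \ (G ∪ H),
      (∀ x ∈ U, (∀ D ∈ G ∪ H, x ∉ D) → ∃ D ∈ S', x ∈ D) →
      ∑ D ∈ S, w D ≤ ∑ D ∈ S', w D) :
    ∑ D ∈ G, w D + ∑ D ∈ H, w D + ∑ D ∈ S, w D ≤ (1 + ε) * ∑ D ∈ O, w D := by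
  have hwO : ∀ D ∈ O, 0 ≤ w D := fun D hD => hw D (hO hD)
  have hS : ∑ D ∈ S, w D ≤ ∑ D ∈ O \ (G ∪ H), w D :=
    hSopt _ (sdiff_subset_sdiff hO le_rfl) (exists_mem_sdiff_of_forall_notMem hOcov)
  have hH : ∑ D ∈ H, w D ≤ ε * ∑ D ∈ G, w D :=
    sum_le_mul_sum_of_card_le hε hwt hGw hHw (by rwa [hGcard])
  have hGH : ε * ∑ D ∈ G, w D ≤ ε * ∑ D ∈ O, w D :=
    mul_le_mul_of_nonneg_left (sum_le_sum_of_subset_of_nonneg hGO fun D hD _ => hwO D hD) hε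
  linarith [sum_add_sum_sdiff_union_le (H := H) hwO hGO]

/-- After guessing the `C` heaviest sets `G` of a cover `O`, adding a small
auxiliary family `H` of cheap sets, and solving the residual instance optimally by `S`,
the combined solution has weight at most `(1 + ε)` times the weight of `O`. -/
theorem wudc_guessing_inequality {α : Type*} [DecidableEq α]
    (U : Finset α) (𝒟 : Finset (Finset α))
    (hsub : ∀ D ∈ 𝒟, D ⊆ U)
    (w : Finset α → ℝ) (hw : ∀ D ∈ 𝒟, 0 ≤ w D)
    (O : Finset (Finset α)) (hO : O ⊆ 𝒟)
    (hOcov : ∀ x ∈ U, ∃ D ∈ O, x ∈ D)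
    (C : ℕ) (hC : 0 < C) (ε wt : ℝ) (hε : 0 ≤ ε) (hwt : 0 ≤ wt)
    (G : Finset (Finset α)) (hGO : G ⊆ O) (hGcard : G.card = C)
    (hGw : ∀ D ∈ G, wt ≤ w D)
    (H : Finset (Finset α)) (hH𝒟 : H ⊆ 𝒟) (hHG : Disjoint H G)
    (hHcard : (H.card : ℝ) ≤ ε * C) (hHw : ∀ D ∈ H, w D ≤ wt)
    (S : Finset (Finset α)) (hS : S ⊆ 𝒟 \ (G ∪ H))
    (hScov : ∀ x ∈ U, (∀ D ∈ G ∪ H, x ∉ D) → ∃ D ∈ S, x ∈ D)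
    (hSopt : ∀ S' ⊆ 𝒟 \ (G ∪ H),
      (∀ x ∈ U, (∀ D ∈ G ∪ H, x ∉ D) → ∃ D ∈ S', x ∈ D) →
      ∑ D ∈ S, w D ≤ ∑ D ∈ S', w D) :
    ∑ D ∈ G, w D + ∑ D ∈ H, w D + ∑ D ∈ S, w D ≤ (1 + ε) * ∑ D ∈ O, w D :=
  wudc_guessing_inequality_general U 𝒟 w hw O hO hOcov C ε wt hε hwt G hGO hGcard hGw H hHcard hHw S
    hSopt
end

section
/- Let D_u, D_l, A, B be points of the Euclidean plane with dist(A, D_u) = dist(A, D_l) = dist(B, D_u) = dist(B, D_l) = 1, A ≠ B and D_u ≠ D_l (so A and B are the two intersection points of the unit circles centered at D_u and D_l). Let μ ≥ 0 and let D_s, D_s' be points with dist(D_u, D_s) ≤ μ and dist(D_l, D_s') ≤ μ. If cos(∠ A D_u B / 2) < 1 − μ, then dist(D_s, D_s') < 2; in particular, the unit disks centered at D_s and D_s' overlap. -/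
/-!
The two centres `Du`, `Dl` lie on the perpendicular bisector of `AB`, and `A`, `B` on that of
`Du Dl`; in the plane this forces `ADuBDl` to be a rhombus, `(A - Du) + (B - Du) = Dl - Du`
(the vectors `Dl - Du` and `(A - Du) + (B - Du)` are both orthogonal to `A - B`, hence parallel,
and their inner product is `‖Dl - Du‖²`). So `dist Du Dl = 2 cos(θ/2)` for `θ = ∠ A Du B`, and the
triangle inequality gives `dist Ds Ds' ≤ 2μ + 2 cos(θ/2) < 2`.
-/

open EuclideanGeometry Real

open scoped EuclideanSpace RealInnerProductSpace

namespace InnerProductGeometry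

variable {V : Type*} [NormedAddCommGroup V] [InnerProductSpace ℝ V]

theorem norm_add_eq_two_mul_norm_mul_cos_half_angle {x y : V} (h : ‖x‖ = ‖y‖) :
    ‖x + y‖ = 2 * ‖x‖ * cos (angle x y / 2) := by
  have hcos : 0 ≤ cos (angle x y / 2) :=
    cos_nonneg_of_mem_Icc ⟨by linarith [angle_nonneg x y, pi_pos], by linarith [angle_le_pi x y]⟩
  have hsq : ‖x + y‖ ^ 2 = (2 * ‖x‖ * cos (angle x y / 2)) ^ 2 := by
    rw [norm_add_sq_real, ← cos_angle_mul_norm_mul_norm, ← h, mul_pow, mul_pow, cos_sq,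
      show 2 * (angle x y / 2) = angle x y by ring]
    ring
  exact (sq_eq_sq₀ (norm_nonneg _) (by positivity)).1 hsq

section Plane

variable [Fact (Module.finrank ℝ V = 2)]

attribute [local instance] FiniteDimensional.of_fact_finrank_eq_two

/-- In the plane, two vectors orthogonal to the same nonzero vector are parallel. -/
theorem inner_sq_eq_norm_sq_mul_norm_sq_of_inner_eq_zero {s x y : V} (hs : s ≠ 0)
    (hx : ⟪s, x⟫ = 0) (hy : ⟪s, y⟫ = 0) : ⟪x, y⟫ ^ 2 = ‖x‖ ^ 2 * ‖y‖ ^ 2 := by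
  let o : Orientation ℝ V (Fin 2) := (Module.finBasisOfFinrankEq ℝ V Fact.out).orientation
  have hxy := o.inner_mul_inner_add_areaForm_mul_areaForm s x y
  have hxx := o.inner_sq_add_areaForm_sq s x
  have hyy := o.inner_sq_add_areaForm_sq s y
  rw [hx, hy] at hxy
  rw [hx] at hxx
  rw [hy] at hyy
  apply mul_left_cancel₀ (pow_ne_zero 2 (pow_ne_zero 2 (norm_ne_zero_iff.2 hs)))
  linear_combination -(o.areaForm s x * o.areaForm s y + ‖s‖ ^ 2 * ⟪x, y⟫) * hxy
    + o.areaForm s y ^ 2 * hxx + ‖s‖ ^ 2 * ‖x‖ ^ 2 * hyy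

theorem add_eq_of_norm_eq_of_norm_sub_eq {u v w : V} {r : ℝ} (hu : ‖u‖ = r) (hv : ‖v‖ = r)
    (huw : ‖u - w‖ = r) (hvw : ‖v - w‖ = r) (huv : u ≠ v) (hw : w ≠ 0) : u + v = w := by
  have huw' : 2 * ⟪u, w⟫ = ‖w‖ ^ 2 := by
    have := norm_sub_sq_real u w
    rw [huw, hu] at this
    linarith
  have hvw' : 2 * ⟪v, w⟫ = ‖w‖ ^ 2 := by
    have := norm_sub_sq_real v w
    rw [hvw, hv] at this
    linarith
  have hsw : ⟪u - v, w⟫ = 0 := by rw [inner_sub_left]; linarith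
  have hpw : ⟪u + v, w⟫ = ‖w‖ ^ 2 := by rw [inner_add_left]; linarith
  have hsp : ⟪u - v, u + v⟫ = 0 := by
    rw [inner_sub_left, inner_add_right, inner_add_right, real_inner_self_eq_norm_sq,
      real_inner_self_eq_norm_sq, real_inner_comm u v, hu, hv]
    ring
  have hcs := inner_sq_eq_norm_sq_mul_norm_sq_of_inner_eq_zero (sub_ne_zero.2 huv) hsp hsw
  rw [hpw] at hcs
  have hp : ‖u + v‖ ^ 2 = ‖w‖ ^ 2 :=
    (mul_right_cancel₀ (pow_ne_zero 2 (norm_ne_zero_iff.2 hw)) (by linear_combination hcs)).symm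
  rw [← sub_eq_zero, ← norm_eq_zero, ← sq_eq_zero_iff, norm_sub_sq_real, hpw, hp]
  ring

end Plane

end InnerProductGeometry

namespace EuclideanGeometry

variable {V P : Type*} [NormedAddCommGroup V] [InnerProductSpace ℝ V] [MetricSpace P]
  [NormedAddTorsor V P]

theorem dist_eq_two_mul_cos_half_angle_of_dist_eq [Fact (Module.finrank ℝ V = 2)] {A B C D : P}
    {r : ℝ} (hAC : dist A C = r) (hAD : dist A D = r) (hBC : dist B C = r) (hBD : dist B D = r)
    (hAB : A ≠ B) (hCD : C ≠ D) : dist C D = 2 * r * cos (∠ A C B / 2) := by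
  rw [dist_eq_norm_vsub V] at hAC hAD hBC hBD
  have hrhombus : (A -ᵥ C) + (B -ᵥ C) = D -ᵥ C :=
    InnerProductGeometry.add_eq_of_norm_eq_of_norm_sub_eq hAC hBC
      (by rwa [vsub_sub_vsub_cancel_right]) (by rwa [vsub_sub_vsub_cancel_right])
      (fun h => hAB (vsub_left_cancel h)) (vsub_ne_zero.2 hCD.symm)
  rw [dist_comm, dist_eq_norm_vsub V, ← hrhombus,
    InnerProductGeometry.norm_add_eq_two_mul_norm_mul_cos_half_angle (hAC.trans hBC.symm), hAC]
  rfl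

end EuclideanGeometry

theorem Metric.closedBall_inter_closedBall_nonempty_of_dist_le_two_mul {V P : Type*}
    [SeminormedAddCommGroup V] [NormedSpace ℝ V] [PseudoMetricSpace P] [NormedAddTorsor V P]
    {x y : P} {r : ℝ} (h : dist x y ≤ 2 * r) :
    (Metric.closedBall x r ∩ Metric.closedBall y r).Nonempty := by
  refine ⟨midpoint ℝ x y, ?_, ?_⟩
  · rw [Metric.mem_closedBall, dist_midpoint_left, Real.norm_ofNat]
    linarith
  · rw [Metric.mem_closedBall, dist_midpoint_right, Real.norm_ofNat]
    linarith

theorem gadgets_overlap_of_large_central_angle_general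
    (Du Dl A B : EuclideanSpace ℝ (Fin 2))
    (h₁ : dist A Du = 1) (h₂ : dist A Dl = 1)
    (h₃ : dist B Du = 1) (h₄ : dist B Dl = 1)
    (hAB : A ≠ B) (hD : Du ≠ Dl)
    (μ : ℝ)
    (Ds Ds' : EuclideanSpace ℝ (Fin 2))
    (hDs : dist Du Ds ≤ μ) (hDs' : dist Dl Ds' ≤ μ)
    (hangle : Real.cos (∠ A Du B / 2) < 1 - μ) :
    dist Ds Ds' < 2 ∧
      (Metric.closedBall Ds 1 ∩ Metric.closedBall Ds' 1).Nonempty := by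
  have hcentres : dist Du Dl = 2 * cos (∠ A Du B / 2) := by
    simpa using dist_eq_two_mul_cos_half_angle_of_dist_eq h₁ h₂ h₃ h₄ hAB hD
  have hlt : dist Ds Ds' < 2 :=
    calc dist Ds Ds' ≤ dist Ds Du + dist Du Dl + dist Dl Ds' := dist_triangle4 _ _ _ _
      _ < 2 := by rw [dist_comm Ds, hcentres]; linarith
  exact ⟨hlt, Metric.closedBall_inter_closedBall_nonempty_of_dist_le_two_mul (by linarith)⟩

/-- Lemma A.2 of the paper: If the unit circles centered at `D_u` and `D_l`
meet at `A ≠ B` with a large central angle (precisely, `cos(∠ A D_u B / 2) < 1 - μ`), and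
`D_s`, `D_s'` are within distance `μ` of `D_u`, `D_l` respectively, then
`dist D_s D_s' < 2`, i.e., the unit disks centered at `D_s` and `D_s'` overlap. -/
theorem gadgets_overlap_of_large_central_angle
    (Du Dl A B : EuclideanSpace ℝ (Fin 2))
    (h₁ : dist A Du = 1) (h₂ : dist A Dl = 1)
    (h₃ : dist B Du = 1) (h₄ : dist B Dl = 1)
    (hAB : A ≠ B) (hD : Du ≠ Dl)
    (μ : ℝ) (hμ : 0 ≤ μ)
    (Ds Ds' : EuclideanSpace ℝ (Fin 2))
    (hDs : dist Du Ds ≤ μ) (hDs' : dist Dl Ds' ≤ μ)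
    (hangle : Real.cos (∠ A Du B / 2) < 1 - μ) :
    dist Ds Ds' < 2 ∧
      (Metric.closedBall Ds 1 ∩ Metric.closedBall Ds' 1).Nonempty :=
  gadgets_overlap_of_large_central_angle_general Du Dl A B h₁ h₂ h₃ h₄ hAB hD μ Ds Ds' hDs hDs'
    hangle
end

section
/- For all real numbers x and d with 0 < x, x ≤ d and d < 1, one has √(1 − x²) + d − √(d² − x²) > 1. -/
/-! Rationalizing gives `d - √(d² - x²) = x² / (d + √(d² - x²))`, whose denominator increases
with `d`. So `d ↦ d - √(d² - x²)` is strictly decreasing, and its value at `d < 1` exceeds its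
value `1 - √(1 - x²)` at `1`. -/

namespace Real

theorem sub_sqrt_sq_sub_sq_eq_div {x d : ℝ} (hd : 0 < d) (hxd : x ^ 2 ≤ d ^ 2) :
    d - √(d ^ 2 - x ^ 2) = x ^ 2 / (d + √(d ^ 2 - x ^ 2)) := by
  have hsq := sq_sqrt (sub_nonneg.2 hxd)
  rw [eq_div_iff (by positivity)]
  linear_combination -hsq

theorem sub_sqrt_sq_sub_sq_lt_of_lt {x d e : ℝ} (hx : 0 < x) (hxd : x ≤ d) (hde : d < e) :
    e - √(e ^ 2 - x ^ 2) < d - √(d ^ 2 - x ^ 2) := by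
  have hd : 0 < d := hx.trans_le hxd
  have hxd2 : x ^ 2 ≤ d ^ 2 := pow_le_pow_left₀ hx.le hxd 2
  have hde2 : d ^ 2 ≤ e ^ 2 := pow_le_pow_left₀ hd.le hde.le 2
  rw [sub_sqrt_sq_sub_sq_eq_div hd hxd2, sub_sqrt_sq_sub_sq_eq_div (hd.trans hde) (hxd2.trans hde2)]
  have hsqrt : √(d ^ 2 - x ^ 2) ≤ √(e ^ 2 - x ^ 2) := sqrt_le_sqrt (by linarith)
  exact div_lt_div_of_pos_left (by positivity) (by positivity) (by linarith)

end Real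

/-- computation in Lemma A.1 of the paper: for `0 < x ≤ d < 1`,
`√(1 − x²) + d − √(d² − x²) > 1`. -/
theorem sqrt_inequality_lemma_A1 (x d : ℝ) (hx : 0 < x) (hxd : x ≤ d) (hd : d < 1) :
    Real.sqrt (1 - x ^ 2) + d - Real.sqrt (d ^ 2 - x ^ 2) > 1 := by
  have h := Real.sub_sqrt_sq_sub_sq_lt_of_lt hx hxd hd
  rw [one_pow] at h
  linarith
end
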